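/- Let 𝒴 be a finite alphabet and let A, B be probability mass functions on 𝒴 with A(y) > 0 and B(y) > 0 for all y (so that D(A‖B) is finite). For α ≥ 1 define f(A,B,α) := sup { (α−1)·h(β) + h((α−1)·β) − d_{(α−1)β}(A‖B) − (α−1)·d_β(B‖A) : β ∈ [0,1], (α−1)·β ≤ 1 }. Then f(A,B,α) → ∞ as α → ∞; that is, for every M there exists α₀ ≥ 1 such that f(A,B,α) > M for all α ≥ α₀. -/
import Mathlib

/-- A probability mass function on a finite alphabet. -/
def IsPMF {X : Type*} [Fintype X] (P : X → ℝ) : Prop :=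
  (∀ x, 0 ≤ P x) ∧ ∑ x, P x = 1

/-- Kullback–Leibler divergence (natural logarithm, with the convention
`0 · log (0/q) = 0`). -/
noncomputable def KLdiv {X : Type*} [Fintype X] (P Q : X → ℝ) : ℝ :=
  ∑ x, P x * Real.log (P x / Q x)

/-- Partial divergence between `P` and `Q` with mismatch ratio `ρ`. -/
noncomputable def partialDiv {X : Type*} [Fintype X] (ρ : ℝ) (P Q : X → ℝ) : ℝ :=
  sInf { v : ℝ | ∃ P₁ P₂ : X → ℝ, IsPMF P₁ ∧ IsPMF P₂ ∧
    (∀ x, ρ * P₁ x + (1 - ρ) * P₂ x = P x) ∧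
    v = ρ * KLdiv P₁ Q + (1 - ρ) * KLdiv P₂ P }

/-- Binary entropy function (natural logarithm). -/
noncomputable def binEnt (p : ℝ) : ℝ :=
  -(p * Real.log p) - (1 - p) * Real.log (1 - p)

/-- The overhead cost
`f(A,B,α) = sup { (α−1)h(β) + h((α−1)β) − d_{(α−1)β}(A‖B) − (α−1)d_β(B‖A) :
  β ∈ [0,1], (α−1)β ≤ 1 }`. -/
noncomputable def overhead {Y : Type*} [Fintype Y] (A B : Y → ℝ) (α : ℝ) : ℝ :=
  sSup { v : ℝ | ∃ β : ℝ, β ∈ Set.Icc (0 : ℝ) 1 ∧ (α - 1) * β ≤ 1 ∧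
    v = (α - 1) * binEnt β + binEnt ((α - 1) * β)
        - partialDiv ((α - 1) * β) A B - (α - 1) * partialDiv β B A }

lemma KLdiv_nonneg {X : Type*} [Fintype X] (P Q : X → ℝ)
    (hP : IsPMF P) (hQ : IsPMF Q) (hQpos : ∀ x, 0 < Q x) : 0 ≤ KLdiv P Q := by
  have h : ∀ x, P x - Q x ≤ P x * Real.log (P x / Q x) := by
    intro x
    rcases eq_or_lt_of_le (hP.1 x) with h0 | h0
    · simp [← h0]
      exact le_of_lt (hQpos x)
    · have hq := hQpos x
      have hlog : Real.log (Q x / P x) ≤ Q x / P x - 1 :=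
        Real.log_le_sub_one_of_pos (by positivity)
      have : 1 - Q x / P x ≤ Real.log (P x / Q x) := by
        rw [show P x / Q x = (Q x / P x)⁻¹ by field_simp, Real.log_inv]
        linarith
      have := mul_le_mul_of_nonneg_left this (le_of_lt h0)
      have hc : P x * (Q x / P x) = Q x := by field_simp
      nlinarith
  calc (0:ℝ) = ∑ x, (P x - Q x) := by rw [Finset.sum_sub_distrib, hP.2, hQ.2]; ring
    _ ≤ _ := Finset.sum_le_sum (fun x _ => h x)

lemma KLdiv_self {X : Type*} [Fintype X] (P : X → ℝ) (hPpos : ∀ x, 0 < P x) :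
    KLdiv P P = 0 := by
  unfold KLdiv
  apply Finset.sum_eq_zero
  intro x _
  rw [div_self (ne_of_gt (hPpos x)), Real.log_one, mul_zero]

lemma pdSet_nonneg {X : Type*} [Fintype X] (ρ : ℝ) (P Q : X → ℝ)
    (hρ0 : 0 ≤ ρ) (hρ1 : ρ ≤ 1) (hP : IsPMF P) (hQ : IsPMF Q)
    (hPpos : ∀ x, 0 < P x) (hQpos : ∀ x, 0 < Q x) :
    ∀ v ∈ { v : ℝ | ∃ P₁ P₂ : X → ℝ, IsPMF P₁ ∧ IsPMF P₂ ∧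
    (∀ x, ρ * P₁ x + (1 - ρ) * P₂ x = P x) ∧
    v = ρ * KLdiv P₁ Q + (1 - ρ) * KLdiv P₂ P }, 0 ≤ v := by
  rintro v ⟨P₁, P₂, h1, h2, _, rfl⟩
  have k1 := KLdiv_nonneg P₁ Q h1 hQ hQpos
  have k2 := KLdiv_nonneg P₂ P h2 hP hPpos
  have : (0:ℝ) ≤ 1 - ρ := by linarith
  positivity

lemma partialDiv_nonneg {X : Type*} [Fintype X] (ρ : ℝ) (P Q : X → ℝ)
    (hρ0 : 0 ≤ ρ) (hρ1 : ρ ≤ 1) (hP : IsPMF P) (hQ : IsPMF Q)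
    (hPpos : ∀ x, 0 < P x) (hQpos : ∀ x, 0 < Q x) :
    0 ≤ partialDiv ρ P Q :=
  Real.sInf_nonneg (pdSet_nonneg ρ P Q hρ0 hρ1 hP hQ hPpos hQpos)

lemma partialDiv_one {X : Type*} [Fintype X] (P Q : X → ℝ) (hP : IsPMF P) :
    partialDiv 1 P Q = KLdiv P Q := by
  unfold partialDiv
  have : { v : ℝ | ∃ P₁ P₂ : X → ℝ, IsPMF P₁ ∧ IsPMF P₂ ∧
      (∀ x, 1 * P₁ x + (1 - 1) * P₂ x = P x) ∧
      v = 1 * KLdiv P₁ Q + (1 - 1) * KLdiv P₂ P } = {KLdiv P Q} := by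
    ext v
    simp only [Set.mem_setOf_eq, Set.mem_singleton_iff]
    constructor
    · rintro ⟨P₁, P₂, h1, h2, heq, rfl⟩
      have : P₁ = P := funext fun x => by have := heq x; linarith
      subst this; ring
    · rintro rfl
      exact ⟨P, P, hP, hP, fun x => by ring, by ring⟩
  rw [this, csInf_singleton]

lemma partialDiv_le {X : Type*} [Fintype X] (ρ : ℝ) (P Q : X → ℝ)
    (hρ0 : 0 ≤ ρ) (hρ1 : ρ ≤ 1) (hP : IsPMF P) (hQ : IsPMF Q)
    (hPpos : ∀ x, 0 < P x) (hQpos : ∀ x, 0 < Q x) :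
    partialDiv ρ P Q ≤ ρ * KLdiv P Q := by
  apply csInf_le
  · exact ⟨0, fun v hv => pdSet_nonneg ρ P Q hρ0 hρ1 hP hQ hPpos hQpos v hv⟩
  · exact ⟨P, P, hP, hP, fun x => by ring, by rw [KLdiv_self P hPpos]; ring⟩

lemma neg_mul_log_le (p : ℝ) (hp0 : 0 ≤ p) : -(p * Real.log p) ≤ 1 - p := by
  rcases eq_or_lt_of_le hp0 with h | h
  · simp [← h]
  · have := Real.log_le_sub_one_of_pos (show (0:ℝ) < p⁻¹ by positivity)
    rw [Real.log_inv] at this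
    have h2 : p * (p⁻¹ - 1) = 1 - p := by field_simp
    nlinarith

lemma binEnt_le_one (p : ℝ) (hp0 : 0 ≤ p) (hp1 : p ≤ 1) : binEnt p ≤ 1 := by
  unfold binEnt
  have h1 := neg_mul_log_le p hp0
  have h2 := neg_mul_log_le (1 - p) (by linarith)
  linarith

lemma binEnt_one : binEnt 1 = 0 := by simp [binEnt]

lemma binEnt_ge (p : ℝ) (hp0 : 0 ≤ p) (hp1 : p ≤ 1) : -(p * Real.log p) ≤ binEnt p := by
  unfold binEnt
  have : Real.log (1 - p) ≤ 0 := Real.log_nonpos (by linarith) (by linarith)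
  nlinarith

/-- The overhead cost tends to infinity: for every `M` there is `α₀ ≥ 1` such that
`f(A,B,α) > M` for all `α ≥ α₀`. -/
theorem overhead_tendsto_atTop {Y : Type*} [Fintype Y] (A B : Y → ℝ)
    (hA : IsPMF A) (hB : IsPMF B)
    (hApos : ∀ y, 0 < A y) (hBpos : ∀ y, 0 < B y) :
    ∀ M : ℝ, ∃ α₀ : ℝ, 1 ≤ α₀ ∧ ∀ α : ℝ, α₀ ≤ α → M < overhead A B α := by
  intro M
  set D1 := KLdiv A B with hD1
  set D2 := KLdiv B A with hD2
  refine ⟨max 2 (Real.exp (M + D1 + D2) + 2), le_trans (by norm_num) (le_max_left _ _), ?_⟩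
  intro α hα
  have hα2 : 2 ≤ α := le_trans (le_max_left _ _) hα
  have hαe : Real.exp (M + D1 + D2) + 2 ≤ α := le_trans (le_max_right _ _) hα
  have hα1 : (0:ℝ) < α - 1 := by linarith
  set β : ℝ := (α - 1)⁻¹ with hβdef
  have hβ0 : 0 < β := by positivity
  have hβ1 : β ≤ 1 := by
    rw [hβdef]
    rw [inv_le_one_iff₀]
    right; linarith
  have hkey : (α - 1) * β = 1 := mul_inv_cancel₀ (ne_of_gt hα1)
  -- the witness value
  set v : ℝ := (α - 1) * binEnt β + binEnt ((α - 1) * β)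
      - partialDiv ((α - 1) * β) A B - (α - 1) * partialDiv β B A with hv
  have hmem : v ∈ { v : ℝ | ∃ β : ℝ, β ∈ Set.Icc (0 : ℝ) 1 ∧ (α - 1) * β ≤ 1 ∧
      v = (α - 1) * binEnt β + binEnt ((α - 1) * β)
        - partialDiv ((α - 1) * β) A B - (α - 1) * partialDiv β B A } :=
    ⟨β, ⟨le_of_lt hβ0, hβ1⟩, le_of_eq hkey, rfl⟩
  -- bounded above
  have hbdd : BddAbove { v : ℝ | ∃ β : ℝ, β ∈ Set.Icc (0 : ℝ) 1 ∧ (α - 1) * β ≤ 1 ∧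
      v = (α - 1) * binEnt β + binEnt ((α - 1) * β)
        - partialDiv ((α - 1) * β) A B - (α - 1) * partialDiv β B A } := by
    refine ⟨(α - 1) * 1 + 1, ?_⟩
    rintro w ⟨γ, ⟨hγ0, hγ1⟩, hγc, rfl⟩
    have hγc0 : 0 ≤ (α - 1) * γ := mul_nonneg (by linarith) hγ0
    have b1 : binEnt γ ≤ 1 := binEnt_le_one γ hγ0 hγ1
    have b2 : binEnt ((α - 1) * γ) ≤ 1 := binEnt_le_one _ hγc0 hγc
    have p1 : 0 ≤ partialDiv ((α - 1) * γ) A B :=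
      partialDiv_nonneg _ A B hγc0 hγc hA hB hApos hBpos
    have p2 : 0 ≤ partialDiv γ B A :=
      partialDiv_nonneg _ B A hγ0 hγ1 hB hA hBpos hApos
    have : (α - 1) * binEnt γ ≤ (α - 1) * 1 :=
      mul_le_mul_of_nonneg_left b1 (by linarith)
    nlinarith
  -- lower bound on v
  have hpd1 : partialDiv ((α - 1) * β) A B = D1 := by
    rw [hkey]; exact partialDiv_one A B hA
  have hpd2 : (α - 1) * partialDiv β B A ≤ D2 := by
    have := partialDiv_le β B A (le_of_lt hβ0) hβ1 hB hA hBpos hApos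
    have h2 := mul_le_mul_of_nonneg_left this (le_of_lt hα1)
    calc (α - 1) * partialDiv β B A ≤ (α - 1) * (β * D2) := h2
      _ = ((α - 1) * β) * D2 := by ring
      _ = D2 := by rw [hkey]; ring
  have hlogβ : Real.log β = -Real.log (α - 1) := by
    rw [hβdef, Real.log_inv]
  have hent : Real.log (α - 1) ≤ (α - 1) * binEnt β := by
    have hge := binEnt_ge β (le_of_lt hβ0) hβ1
    have : (α - 1) * (-(β * Real.log β)) = Real.log (α - 1) := by
      rw [hlogβ]
      linear_combination Real.log (α - 1) * hkey
    nlinarith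
  have hvlb : Real.log (α - 1) - D1 - D2 ≤ v := by
    rw [hv, hpd1, hkey, binEnt_one]
    linarith [hpd2, hent]
  have hlog : M + D1 + D2 < Real.log (α - 1) := by
    have h1 : Real.exp (M + D1 + D2) < α - 1 := by linarith
    calc M + D1 + D2 = Real.log (Real.exp (M + D1 + D2)) := (Real.log_exp _).symm
      _ < Real.log (α - 1) := Real.log_lt_log (Real.exp_pos _) h1
  have hMv : M < v := by linarith
  exact lt_of_lt_of_le hMv (le_csSup hbdd hmem)
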